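/- The number of idempotent n×n matrices over F_q with rank j equals γ_n / (γ_j · γ_{n-j}), the number of ordered direct sum decompositions F_q^n = U ⊕ W with dim U = j. -/

import Mathlib

/-!
An idempotent `P` is the projection onto `range P` along `ker P`, so idempotents of rank `j`
correspond to ordered decompositions `U ⊕ W` with `dim U = j`. Splitting a basis indexed by
`Fin j ⊕ Fin (n - j)` into the spans of its two halves maps the bases of `F_q^n` onto these
decompositions, the fibre over `(U, W)` being the pairs (basis of `U`, basis of `W`). Ordered bases
of an `m`-dimensional space are counted by `γ_m`, hence `γ_n = #{(U, W)} · γ_j · γ_{n-j}`.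
-/

/-- The order of `GL_m(F_q)`. -/
def gma (q m : ℕ) : ℕ := ∏ i ∈ Finset.range m, (q ^ m - q ^ i)

open Module Submodule LinearMap

theorem gma_pos {q : ℕ} (hq : 1 < q) (m : ℕ) : 0 < gma q m :=
  Finset.prod_pos fun _ hi => Nat.sub_pos_of_lt (Nat.pow_lt_pow_right hq (Finset.mem_range.1 hi))

section Ring

variable {R M ι κ : Type*} [Ring R] [AddCommGroup M] [Module R M]

noncomputable def LinearMap.isIdempotentElemEquivIsCompl :
    {f : Module.End R M // IsIdempotentElem f} ≃
      {p : Submodule R M × Submodule R M // IsCompl p.1 p.2} where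
  toFun f := ⟨(range f.1, ker f.1), IsIdempotentElem.isCompl f.2⟩
  invFun p := ⟨p.1.1.projection p.1.2 p.2, isIdempotentElem_projection p.2⟩
  left_inv f := Subtype.ext (IsIdempotentElem.eq_projection f.2).symm
  right_inv p := Subtype.ext <| Prod.ext (range_projection p.2) (ker_projection p.2)

theorem Module.Basis.isCompl_span_inl_span_inr (b : Basis (ι ⊕ κ) R M) :
    IsCompl (span R (Set.range (b ∘ Sum.inl))) (span R (Set.range (b ∘ Sum.inr))) := by
  rw [Set.range_comp, Set.range_comp]
  constructor
  · exact b.linearIndependent.disjoint_span_image Set.isCompl_range_inl_range_inr.disjoint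
  · rw [codisjoint_iff, ← span_union, ← Set.image_union, Set.range_inl_union_range_inr,
      Set.image_univ, b.span_eq]

variable {U W : Submodule R M}

theorem Module.Basis.prod_map_prodEquivOfIsCompl_comp_inl (h : IsCompl U W) (bU : Basis ι R U)
    (bW : Basis κ R W) :
    (bU.prod bW).map (prodEquivOfIsCompl U W h) ∘ Sum.inl = U.subtype ∘ bU := by
  ext i
  simp [coe_prodEquivOfIsCompl']

theorem Module.Basis.prod_map_prodEquivOfIsCompl_comp_inr (h : IsCompl U W) (bU : Basis ι R U)
    (bW : Basis κ R W) :
    (bU.prod bW).map (prodEquivOfIsCompl U W h) ∘ Sum.inr = W.subtype ∘ bW := by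
  ext i
  simp [coe_prodEquivOfIsCompl']

noncomputable def Module.Basis.sumEquivOfIsCompl (h : IsCompl U W) :
    {b : Basis (ι ⊕ κ) R M //
        span R (Set.range (b ∘ Sum.inl)) = U ∧ span R (Set.range (b ∘ Sum.inr)) = W} ≃
      Basis ι R U × Basis κ R W where
  toFun b :=
    ((Basis.span (b.1.linearIndependent.comp Sum.inl Sum.inl_injective)).map
        (LinearEquiv.ofEq _ _ b.2.1),
      (Basis.span (b.1.linearIndependent.comp Sum.inr Sum.inr_injective)).map
        (LinearEquiv.ofEq _ _ b.2.2))
  invFun bp := ⟨(bp.1.prod bp.2).map (prodEquivOfIsCompl U W h), by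
    rw [prod_map_prodEquivOfIsCompl_comp_inl, prod_map_prodEquivOfIsCompl_comp_inr,
      Set.range_comp, Set.range_comp, span_image, span_image, bp.1.span_eq, bp.2.span_eq,
      map_subtype_top, map_subtype_top]
    exact ⟨rfl, rfl⟩⟩
  left_inv b := by
    refine Subtype.ext <| Basis.eq_of_apply_eq ?_
    rintro (i | i) <;> simp [coe_prodEquivOfIsCompl']
  right_inv bp := by
    refine Prod.ext (Basis.eq_of_apply_eq fun i => Subtype.ext ?_)
      (Basis.eq_of_apply_eq fun i => Subtype.ext ?_) <;>
    simp [coe_prodEquivOfIsCompl']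

end Ring

section Matrix

variable {R m : Type*} [CommRing R] [Fintype m] [DecidableEq m]

noncomputable def Matrix.isIdempotentElemEquivIsCompl :
    {P : Matrix m m R // IsIdempotentElem P} ≃
      {p : Submodule R (m → R) × Submodule R (m → R) // IsCompl p.1 p.2} :=
  (Matrix.toLinAlgEquiv'.toEquiv.subtypeEquiv fun P => by
    simp only [IsIdempotentElem, AlgEquiv.toEquiv_eq_coe, EquivLike.coe_coe, ← map_mul,
      EmbeddingLike.apply_eq_iff_eq]).trans
    LinearMap.isIdempotentElemEquivIsCompl

noncomputable def Matrix.idempotentOfRankEquiv (j : ℕ) :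
    {P : Matrix m m R // P * P = P ∧ P.rank = j} ≃
      {p : Submodule R (m → R) × Submodule R (m → R) //
        IsCompl p.1 p.2 ∧ finrank R p.1 = j} :=
  (Equiv.subtypeSubtypeEquivSubtypeInter (fun P : Matrix m m R => IsIdempotentElem P)
      (fun P => P.rank = j)).symm.trans <|
    (Equiv.subtypeEquiv Matrix.isIdempotentElemEquivIsCompl fun _ => Iff.rfl).trans <|
    Equiv.subtypeSubtypeEquivSubtypeInter
      (fun p : Submodule R (m → R) × Submodule R (m → R) => IsCompl p.1 p.2)
      (fun p => finrank R p.1 = j)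

end Matrix

section Field

variable {K V : Type*} [Field K] [AddCommGroup V] [Module K V]

noncomputable def Module.Basis.complPair {j k : ℕ} (b : Basis (Fin j ⊕ Fin k) K V) :
    {p : Submodule K V × Submodule K V // IsCompl p.1 p.2 ∧ finrank K p.1 = j} :=
  ⟨(span K (Set.range (b ∘ Sum.inl)), span K (Set.range (b ∘ Sum.inr))),
    b.isCompl_span_inl_span_inr, by
      rw [finrank_span_eq_card (b.linearIndependent.comp Sum.inl Sum.inl_injective),
        Fintype.card_fin]⟩

noncomputable def Module.Basis.equivLinearIndependent [FiniteDimensional K V] {ι : Type*}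
    [Fintype ι] (hι : Fintype.card ι = finrank K V) :
    Basis ι K V ≃ {s : ι → V // LinearIndependent K s} where
  toFun b := ⟨b, b.linearIndependent⟩
  invFun s := basisOfLinearIndependentOfCardEqFinrank' s.1 s.2 hι
  left_inv b := Basis.eq_of_apply_eq fun _ => by simp
  right_inv s := Subtype.ext <| by simp

variable [Fintype K] [Finite V]

theorem Module.Basis.card_eq_gma {ι : Type*} [Fintype ι] (hι : Fintype.card ι = finrank K V) :
    Nat.card (Basis ι K V) = gma (Fintype.card K) (finrank K V) := by
  let e : Basis ι K V ≃ Basis (Fin (finrank K V)) K V :=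
    ⟨fun b => b.reindex (Fintype.equivFinOfCardEq hι),
      fun b => b.reindex (Fintype.equivFinOfCardEq hι).symm,
      fun b => Basis.eq_of_apply_eq fun _ => by simp,
      fun b => Basis.eq_of_apply_eq fun _ => by simp⟩
  rw [Nat.card_congr (e.trans (equivLinearIndependent (by simp))),
    card_linearIndependent le_rfl, Fin.prod_univ_eq_prod_range
      (fun i => Fintype.card K ^ finrank K V - Fintype.card K ^ i)]
  rfl

theorem card_isCompl_mul_gma {j : ℕ} (hj : j ≤ finrank K V) :
    Nat.card {p : Submodule K V × Submodule K V // IsCompl p.1 p.2 ∧ finrank K p.1 = j} *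
        (gma (Fintype.card K) j * gma (Fintype.card K) (finrank K V - j)) =
      gma (Fintype.card K) (finrank K V) := by
  let _ : Fintype {p : Submodule K V × Submodule K V // IsCompl p.1 p.2 ∧ finrank K p.1 = j} :=
    Fintype.ofFinite _
  have _ : Finite (Basis (Fin j ⊕ Fin (finrank K V - j)) K V) :=
    Finite.of_injective _ DFunLike.coe_injective
  have hfiber : ∀ p, Nat.card {b : Basis (Fin j ⊕ Fin (finrank K V - j)) K V // b.complPair = p} =
      gma (Fintype.card K) j * gma (Fintype.card K) (finrank K V - j) := by
    rintro ⟨⟨U, W⟩, hUW, hU⟩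
    dsimp only at hUW hU
    have hW : finrank K W = finrank K V - j := by
      have := Submodule.finrank_add_eq_of_isCompl hUW
      omega
    rw [Nat.card_congr ((Equiv.subtypeEquivRight fun b => by
        simp only [Basis.complPair, Subtype.ext_iff, Prod.ext_iff]).trans
          (Basis.sumEquivOfIsCompl hUW)),
      Nat.card_prod, Basis.card_eq_gma (by simpa using hU.symm),
      Basis.card_eq_gma (by simpa using hW.symm), hU, hW]
  rw [← Basis.card_eq_gma (ι := Fin j ⊕ Fin (finrank K V - j)) (by simp; omega),
    ← Nat.card_congr (Equiv.sigmaFiberEquiv Basis.complPair), Nat.card_sigma]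
  simp [hfiber]

end Field

/-- The number of `n × n` idempotent matrices over `F_q` of rank `j` equals
`γ_n / (γ_j γ_{n-j})`, the number of ordered direct sum decompositions
`F_q^n = U ⊕ W` with `dim U = j`. -/
theorem card_projections_of_rank (q n j : ℕ) (hj : j ≤ n)
    (F : Type) [Field F] [Fintype F] (hF : Fintype.card F = q) :
    Nat.card {P : Matrix (Fin n) (Fin n) F // P * P = P ∧ P.rank = j} =
      Nat.card {p : Submodule F (Fin n → F) × Submodule F (Fin n → F) //
        IsCompl p.1 p.2 ∧ Module.finrank F p.1 = j} ∧
    (Nat.card {P : Matrix (Fin n) (Fin n) F // P * P = P ∧ P.rank = j} : ℚ) =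
      (gma q n : ℚ) / (gma q j * gma q (n - j)) := by
  subst hF
  have hcard := Nat.card_congr (Matrix.idempotentOfRankEquiv (R := F) (m := Fin n) j)
  have hcount := card_isCompl_mul_gma (K := F) (V := Fin n → F) (by simpa using hj)
  rw [finrank_fin_fun] at hcount
  have hq := Fintype.one_lt_card (α := F)
  have hγ : (gma (Fintype.card F) j : ℚ) * gma (Fintype.card F) (n - j) ≠ 0 := by
    have := gma_pos hq j
    have := gma_pos hq (n - j)
    positivity
  refine ⟨hcard, ?_⟩
  rw [hcard, eq_div_iff hγ, ← hcount]
  push_cast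
  ring
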